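/- Let F be an induced-2C2-saturated family of subsets of [n] with C♭ ⊆ F, and let i ∈ {1,…,n−1} with S_i ∉ F. Then at least one of the following holds: (1) there exist A, B ∈ F \ C♭ such that A is incomparable to B, A is comparable to C_i, B is comparable to S_i, and each of A, C_i is incomparable to each of B, S_i; (2) there exist A, B ∈ F \ C♭ and j ∈ {i−1, i+1} with 1 ≤ j ≤ n−1 such that B ⊊ A, B ⊆ S_j ⊆ A, and each of A, B is incomparable to each of C_j, S_i; (3) there exist A, B, D ∈ F \ C♭ such that B ⊊ A, D is comparable to S_i, and each of A, B is incomparable to each of D, S_i. -/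

import Mathlib

/-- `F ⊆ 𝒫([n])` contains an induced copy of the poset `2C₂`: four sets
`A ⊊ A'`, `B ⊊ B'`, with each of `A, A'` incomparable to each of `B, B'`. -/
def Contains2C2 {n : ℕ} (F : Finset (Finset (Fin n))) : Prop :=
  ∃ A A' B B' : Finset (Fin n), A ∈ F ∧ A' ∈ F ∧ B ∈ F ∧ B' ∈ F ∧
    A ⊂ A' ∧ B ⊂ B' ∧
    ¬ A ⊆ B ∧ ¬ B ⊆ A ∧ ¬ A ⊆ B' ∧ ¬ B' ⊆ A ∧
    ¬ A' ⊆ B ∧ ¬ B ⊆ A' ∧ ¬ A' ⊆ B' ∧ ¬ B' ⊆ A'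

/-- `F` is induced-`2C₂`-saturated: it is induced-`2C₂`-free, and adding any
missing set creates an induced copy of `2C₂`. -/
def Saturated2C2 {n : ℕ} (F : Finset (Finset (Fin n))) : Prop :=
  ¬ Contains2C2 F ∧ ∀ S : Finset (Fin n), S ∉ F → Contains2C2 (insert S F)

/-- The chain element `C_i = [i] = {1,…,i}` (0-indexed: `{x : Fin n | x < i}`). -/
def chainC (n i : ℕ) : Finset (Fin n) := Finset.univ.filter (fun x => (x : ℕ) < i)

/-- The maximal chain `C♭ = {C_0, C_1, …, C_n}`. -/
def Cflat (n : ℕ) : Finset (Finset (Fin n)) := (Finset.range (n + 1)).image (chainC n)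

/-- The shackle `S_i = [i-1] ∪ {i+1}` (1-indexed elements; 0-indexed:
`{x : Fin n | x + 1 < i or x = i}`), meaningful for `1 ≤ i ≤ n-1`. -/
def shackle (n i : ℕ) : Finset (Fin n) :=
  Finset.univ.filter (fun x => (x : ℕ) + 1 < i ∨ (x : ℕ) = i)

/-- Two sets are comparable if one contains the other. -/
def Comp {n : ℕ} (A B : Finset (Fin n)) : Prop := A ⊆ B ∨ B ⊆ A

/-- Two sets are incomparable if neither contains the other. -/
def Incomp {n : ℕ} (A B : Finset (Fin n)) : Prop := ¬ A ⊆ B ∧ ¬ B ⊆ A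

-- Auxiliary lemmas
lemma mem_chainC {n m : ℕ} {x : Fin n} : x ∈ chainC n m ↔ (x : ℕ) < m := by
  simp [chainC]

lemma mem_shackle {n i : ℕ} {x : Fin n} :
    x ∈ shackle n i ↔ ((x : ℕ) + 1 < i ∨ (x : ℕ) = i) := by
  simp [shackle]

lemma chainC_mono {n a b : ℕ} (h : a ≤ b) : chainC n a ⊆ chainC n b := by
  intro x hx
  rw [mem_chainC] at *
  omega

lemma subset_chainC_of_le {n k : ℕ} (h : n ≤ k) (A : Finset (Fin n)) :
    A ⊆ chainC n k := by
  intro x _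
  rw [mem_chainC]
  exact lt_of_lt_of_le x.isLt h

lemma chainC_zero_subset {n : ℕ} (A : Finset (Fin n)) : chainC n 0 ⊆ A := by
  intro x hx
  rw [mem_chainC] at hx
  omega

lemma mem_Cflat {n : ℕ} {X : Finset (Fin n)} :
    X ∈ Cflat n ↔ ∃ m, m ≤ n ∧ chainC n m = X := by
  simp [Cflat, Nat.lt_succ_iff]

lemma chainC_mem_Cflat {n m : ℕ} (h : m ≤ n) : chainC n m ∈ Cflat n :=
  mem_Cflat.2 ⟨m, h, rfl⟩

lemma chainC_pred_subset_shackle {n i : ℕ} : chainC n (i - 1) ⊆ shackle n i := by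
  intro x hx
  rw [mem_chainC] at hx
  rw [mem_shackle]
  omega

lemma shackle_subset_chainC_succ {n i : ℕ} : shackle n i ⊆ chainC n (i + 1) := by
  intro x hx
  rw [mem_shackle] at hx
  rw [mem_chainC]
  omega

lemma incomp_chainC_shackle {n i : ℕ} (hi1 : 1 ≤ i) (hin : i + 1 ≤ n) :
    Incomp (chainC n i) (shackle n i) := by
  constructor
  · intro h
    have := h (x := ⟨i - 1, by omega⟩) (by rw [mem_chainC]; simp; omega)
    rw [mem_shackle] at this
    simp at this
    omega
  · intro h
    have := h (x := ⟨i, by omega⟩) (by rw [mem_shackle]; simp)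
    rw [mem_chainC] at this
    simp at this

lemma comp_chainC_chainC {n a b : ℕ} : Comp (chainC n a) (chainC n b) := by
  rcases le_total a b with h | h
  · exact Or.inl (chainC_mono h)
  · exact Or.inr (chainC_mono h)

lemma eq_chainC_of_incomp_shackle {n i : ℕ} {X : Finset (Fin n)}
    (hX : X ∈ Cflat n) (h : Incomp X (shackle n i)) : X = chainC n i := by
  obtain ⟨m, hm, rfl⟩ := mem_Cflat.1 hX
  rcases lt_trichotomy m i with hlt | heq | hgt
  · exact absurd (fun x hx => chainC_pred_subset_shackle
      (chainC_mono (by omega) hx)) h.1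
  · rw [heq]
  · exact absurd (fun x hx => chainC_mono (by omega)
      (shackle_subset_chainC_succ hx)) h.2

/-- Extraction: a `2C2` created by inserting `S ∉ F` yields a partner `E`
comparable to `S` and a chain pair `A ⊊ A'` in `F` cross-incomparable to both. -/
lemma extract2C2 {n : ℕ} {F : Finset (Finset (Fin n))} {S : Finset (Fin n)}
    (hfree : ¬ Contains2C2 F) (hS : S ∉ F) (h2 : Contains2C2 (insert S F)) :
    ∃ E A A' : Finset (Fin n), E ∈ F ∧ A ∈ F ∧ A' ∈ F ∧
      Comp E S ∧ A ⊂ A' ∧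
      Incomp A E ∧ Incomp A' E ∧ Incomp A S ∧ Incomp A' S := by
  obtain ⟨X, X', Y, Y', hX, hX', hY, hY', hss, hss', h1, h2', h3, h4, h5, h6, h7, h8⟩ := h2
  rw [Finset.mem_insert] at hX hX' hY hY'
  by_cases hXS : X = S
  · subst hXS
    have hX'F : X' ∈ F := hX'.resolve_left (fun h => (ne_of_ssubset hss) h.symm)
    have hYF : Y ∈ F := hY.resolve_left (fun h => h1 (h ▸ le_refl _))
    have hY'F : Y' ∈ F := hY'.resolve_left (fun h => h3 (h ▸ le_refl _))
    exact ⟨X', Y, Y', hX'F, hYF, hY'F, Or.inr hss.subset, hss',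
      ⟨h6, h5⟩, ⟨h8, h7⟩, ⟨h2', h1⟩, ⟨h4, h3⟩⟩
  · have hXF : X ∈ F := hX.resolve_left hXS
    by_cases hX'S : X' = S
    · subst hX'S
      have hYF : Y ∈ F := hY.resolve_left (fun h => h5 (h ▸ le_refl _))
      have hY'F : Y' ∈ F := hY'.resolve_left (fun h => h7 (h ▸ le_refl _))
      exact ⟨X, Y, Y', hXF, hYF, hY'F, Or.inl hss.subset, hss',
        ⟨h2', h1⟩, ⟨h4, h3⟩, ⟨h6, h5⟩, ⟨h8, h7⟩⟩
    · have hX'F : X' ∈ F := hX'.resolve_left hX'S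
      by_cases hYS : Y = S
      · subst hYS
        have hY'F : Y' ∈ F := hY'.resolve_left (fun h => (ne_of_ssubset hss') h.symm)
        exact ⟨Y', X, X', hY'F, hXF, hX'F, Or.inr hss'.subset, hss,
          ⟨h3, h4⟩, ⟨h7, h8⟩, ⟨h1, h2'⟩, ⟨h5, h6⟩⟩
      · have hYF : Y ∈ F := hY.resolve_left hYS
        by_cases hY'S : Y' = S
        · subst hY'S
          exact ⟨Y, X, X', hYF, hXF, hX'F, Or.inl hss'.subset, hss,
            ⟨h1, h2'⟩, ⟨h5, h6⟩, ⟨h3, h4⟩, ⟨h7, h8⟩⟩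
        · have hY'F : Y' ∈ F := hY'.resolve_left hY'S
          exact absurd ⟨X, X', Y, Y', hXF, hX'F, hYF, hY'F, hss, hss',
            h1, h2', h3, h4, h5, h6, h7, h8⟩ hfree

/-- Case breakdown for witnessing a missing shackle `S_i ∉ F` in an
induced-`2C₂`-saturated family `F ⊇ C♭`. -/
theorem shackle_witness_cases (n : ℕ)
    (F : Finset (Finset (Fin n))) (hF : Saturated2C2 F) (hC : Cflat n ⊆ F)
    (i : ℕ) (hi1 : 1 ≤ i) (hin : i + 1 ≤ n) (hSi : shackle n i ∉ F) :
    -- Case 1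
    (∃ A B : Finset (Fin n), A ∈ F ∧ A ∉ Cflat n ∧ B ∈ F ∧ B ∉ Cflat n ∧
      Incomp A B ∧ Comp A (chainC n i) ∧ Comp B (shackle n i) ∧
      Incomp A B ∧ Incomp A (shackle n i) ∧
      Incomp (chainC n i) B ∧ Incomp (chainC n i) (shackle n i)) ∨
    -- Case 2 (with the "furthermore" restriction j ∈ {i-1, i+1}, B ⊆ S_j ⊆ A)
    (∃ A B : Finset (Fin n), ∃ j : ℕ, A ∈ F ∧ A ∉ Cflat n ∧ B ∈ F ∧ B ∉ Cflat n ∧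
      B ⊂ A ∧ (j + 1 = i ∨ j = i + 1) ∧ 1 ≤ j ∧ j + 1 ≤ n ∧
      B ⊆ shackle n j ∧ shackle n j ⊆ A ∧
      Incomp A (chainC n j) ∧ Incomp A (shackle n i) ∧
      Incomp B (chainC n j) ∧ Incomp B (shackle n i)) ∨
    -- Case 3
    (∃ A B D : Finset (Fin n), A ∈ F ∧ A ∉ Cflat n ∧ B ∈ F ∧ B ∉ Cflat n ∧
      D ∈ F ∧ D ∉ Cflat n ∧
      B ⊂ A ∧ Comp D (shackle n i) ∧
      Incomp A D ∧ Incomp A (shackle n i) ∧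
      Incomp B D ∧ Incomp B (shackle n i)) := by
  obtain ⟨hfree, hsat⟩ := hF
  obtain ⟨E, A, A', hE, hA, hA', hcomp, hss, hAE, hA'E, hAS, hA'S⟩ :=
    extract2C2 hfree hSi (hsat _ hSi)
  by_cases hAc : A ∈ Cflat n
  · -- A = C_i : Case 1 with (A', E)
    have hAeq : A = chainC n i := eq_chainC_of_incomp_shackle hAc hAS
    subst hAeq
    left
    refine ⟨A', E, hA', ?_, hE, ?_, hA'E, Or.inr hss.subset, hcomp, hA'E, hA'S,
      hAE, incomp_chainC_shackle hi1 hin⟩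
    · intro hmem
      exact hss.ne (eq_chainC_of_incomp_shackle hmem hA'S).symm
    · intro hmem
      obtain ⟨m, hm, rfl⟩ := mem_Cflat.1 hmem
      rcases comp_chainC_chainC (n := n) (a := m) (b := i) with h | h
      · exact hAE.2 h
      · exact hAE.1 h
  · by_cases hA'c : A' ∈ Cflat n
    · -- A' = C_i : Case 1 with (A, E)
      have hA'eq : A' = chainC n i := eq_chainC_of_incomp_shackle hA'c hA'S
      subst hA'eq
      left
      refine ⟨A, E, hA, ?_, hE, ?_, hAE, Or.inl hss.subset, hcomp, hAE, hAS,
        hA'E, incomp_chainC_shackle hi1 hin⟩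
      · intro hmem
        exact hss.ne (eq_chainC_of_incomp_shackle hmem hAS)
      · intro hmem
        obtain ⟨m, hm, rfl⟩ := mem_Cflat.1 hmem
        rcases comp_chainC_chainC (n := n) (a := m) (b := i) with h | h
        · exact hA'E.2 h
        · exact hA'E.1 h
    · by_cases hEc : E ∈ Cflat n
      · -- E = C_k : Case 2
        obtain ⟨k, hkn, rfl⟩ := mem_Cflat.1 hEc
        have hk1 : 1 ≤ k := by
          by_contra h
          have hk0 : k = 0 := by omega
          subst hk0
          exact hAE.2 (chainC_zero_subset A)
        have hkn' : k < n := by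
          by_contra h
          exact hAE.1 (subset_chainC_of_le (by omega) A)
        have hki : k ≠ i := by
          rintro rfl
          rcases hcomp with h | h
          · exact (incomp_chainC_shackle hi1 hin).1 h
          · exact (incomp_chainC_shackle hi1 hin).2 h
        have s1 : chainC n (k - 1) ⊂ chainC n k := by
          refine ⟨chainC_mono (by omega), fun h => ?_⟩
          have := h (x := ⟨k - 1, by omega⟩) (mem_chainC.2 (by simp; omega))
          rw [mem_chainC] at this
          simp at this
        have s2 : chainC n k ⊂ chainC n (k + 1) := by
          refine ⟨chainC_mono (by omega), fun h => ?_⟩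
          have := h (x := ⟨k, by omega⟩) (mem_chainC.2 (by simp))
          rw [mem_chainC] at this
          simp at this
        have hsubA' : chainC n (k - 1) ⊆ A' := by
          by_contra hcon
          refine hfree ⟨A, A', chainC n (k - 1), chainC n k, hA, hA',
            hC (chainC_mem_Cflat (by omega)), hC (chainC_mem_Cflat (by omega)),
            hss, s1,
            fun h => hAE.1 (h.trans (chainC_mono (by omega))),
            fun h => hcon (h.trans hss.subset),
            hAE.1, hAE.2,
            fun h => hA'E.1 (h.trans (chainC_mono (by omega))),
            hcon, hA'E.1, hA'E.2⟩
        have hsubA : A ⊆ chainC n (k + 1) := by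
          by_contra hcon
          refine hfree ⟨A, A', chainC n k, chainC n (k + 1), hA, hA',
            hC (chainC_mem_Cflat (by omega)), hC (chainC_mem_Cflat (by omega)),
            hss, s2,
            hAE.1, hAE.2,
            hcon,
            fun h => hAE.2 ((chainC_mono (by omega)).trans h),
            hA'E.1, hA'E.2,
            fun h => hcon (hss.subset.trans h),
            fun h => hA'E.2 ((chainC_mono (by omega)).trans h)⟩
        have hnotA' : ∀ x : Fin n, (x : ℕ) = k - 1 → x ∉ A' := by
          intro x hx hmem
          apply hA'E.2
          intro y hy
          rw [mem_chainC] at hy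
          by_cases hy' : (y : ℕ) < k - 1
          · exact hsubA' (mem_chainC.2 hy')
          · have hxy : y = x := Fin.ext (by omega)
            rw [hxy]
            exact hmem
        obtain ⟨a, haA, hak⟩ := Finset.not_subset.1 hAE.1
        have hak' : (a : ℕ) = k := by
          have h1 : (a : ℕ) < k + 1 := mem_chainC.1 (hsubA haA)
          have h2 : ¬ (a : ℕ) < k := fun h => hak (mem_chainC.2 h)
          omega
        have hASk : A ⊆ shackle n k := by
          intro x hx
          have h1 : (x : ℕ) < k + 1 := mem_chainC.1 (hsubA hx)
          have h2 : (x : ℕ) ≠ k - 1 := fun h => hnotA' x h (hss.subset hx)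
          rw [mem_shackle]
          omega
        have hSkA' : shackle n k ⊆ A' := by
          intro x hx
          rw [mem_shackle] at hx
          rcases hx with h | h
          · exact hsubA' (mem_chainC.2 (by omega))
          · have hxa : x = a := Fin.ext (by omega)
            rw [hxa]
            exact hss.subset haA
        have hkcase : k + 1 = i ∨ k = i + 1 := by
          rcases lt_or_gt_of_ne hki with hlt | hgt
          · left
            by_contra hcon
            exact hAS.1 (fun x hx =>
              chainC_pred_subset_shackle (chainC_mono (by omega) (hsubA hx)))
          · right
            by_contra hcon
            exact hA'S.2 (fun x hx =>
              hsubA' (chainC_mono (by omega) (shackle_subset_chainC_succ hx)))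
        right; left
        exact ⟨A', A, k, hA', hA'c, hA, hAc, hss, hkcase, hk1, by omega,
          hASk, hSkA', hA'E, hA'S, hAE, hAS⟩
      · -- Case 3
        right; right
        exact ⟨A', A, E, hA', hA'c, hA, hAc, hE, hEc, hss, hcomp,
          hA'E, hA'S, hAE, hAS⟩
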